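/- arXiv:2209.11858 — 5 statements merged into one kernel-verified Lean document; each statement's English description precedes it below -/
import Mathlib

section
/- Fix E ⊆ ℤ and n ∈ ℕ. The collection 𝒯_n of subsets of ℤ^n is a Boolean algebra: it contains ∅ and ℤ^n and is closed under complementation, finite intersections, and finite unions. -/
open FirstOrder

/-- The language of Presburger arithmetic: one binary function `+` and one
binary relation `<`. -/
def presburgerLang : FirstOrder.Language where
  Functions := fun n => match n with | 2 => Unit | _ => Empty
  Relations := fun n => match n with | 2 => Unit | _ => Empty

/-- The standard interpretation of the Presburger language on `ℤ`. -/
def presburgerStr : presburgerLang.Structure ℤ where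
  funMap {n} f v :=
    match n, f, v with
    | 2, _, v => v 0 + v 1
  RelMap {n} r v :=
    match n, r, v with
    | 2, _, v => v 0 < v 1

/-- A set `s ⊆ ℤ^α` is Presburger-definable: it is the realization set of a
first-order formula without parameters in the structure `(ℤ, <, +)`. -/
def PresburgerDef {α : Type*} (s : Set (α → ℤ)) : Prop :=
  letI := presburgerStr
  ∃ φ : presburgerLang.Formula α, s = {v | φ.Realize v}

/-- A function `f : ℤ^α → ℤ` is Presburger-definable iff its graph is. -/
def PresburgerFun {α : Type*} (f : (α → ℤ) → ℤ) : Prop :=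
  PresburgerDef {v : α ⊕ Unit → ℤ | v (Sum.inr ()) = f (fun i => v (Sum.inl i))}

/-- `A ∈ 𝒯_n`: there are `m ∈ ℕ`, a Presburger set `X ⊆ ℤ^{m+n}`, and an
indexed family `(P_α)_{α ∈ I}` of subsets of `E^m` with
`A = ⋃_{α ∈ I} ⋂_{u ∈ P_α} X_u`, where `X_u = {x : (u, x) ∈ X}`. -/
def InT (E : Set ℤ) (n : ℕ) (A : Set (Fin n → ℤ)) : Prop :=
  ∃ (m : ℕ) (X : Set ((Fin m ⊕ Fin n) → ℤ)) (I : Type) (P : I → Set (Fin m → ℤ)),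
    PresburgerDef X ∧ (∀ α : I, ∀ u ∈ P α, ∀ i, u i ∈ E) ∧
    A = ⋃ α : I, ⋂ u ∈ P α, {x : Fin n → ℤ | Sum.elim u x ∈ X}

lemma pd_univ {α : Type*} : PresburgerDef (Set.univ : Set (α → ℤ)) := by
  letI := presburgerStr
  exact ⟨⊤, by ext v; simp [Language.Formula.realize_top]⟩

lemma pd_compl {α : Type*} {s : Set (α → ℤ)} (h : PresburgerDef s) : PresburgerDef sᶜ := by
  letI := presburgerStr
  obtain ⟨φ, rfl⟩ := h
  exact ⟨φ.not, by ext v; simp [Language.Formula.realize_not]⟩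

lemma pd_inter {α : Type*} {s t : Set (α → ℤ)} (hs : PresburgerDef s) (ht : PresburgerDef t) :
    PresburgerDef (s ∩ t) := by
  letI := presburgerStr
  obtain ⟨φ, rfl⟩ := hs
  obtain ⟨ψ, rfl⟩ := ht
  exact ⟨φ ⊓ ψ, by ext v; simp [Language.Formula.realize_inf]⟩

lemma pd_relabel {α β : Type*} (g : α → β) {s : Set (α → ℤ)} (h : PresburgerDef s) :
    PresburgerDef {v : β → ℤ | v ∘ g ∈ s} := by
  letI := presburgerStr
  obtain ⟨φ, rfl⟩ := h
  exact ⟨φ.relabel g, by ext v; simp [Language.Formula.realize_relabel]⟩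

lemma inT_empty (E : Set ℤ) (n : ℕ) : InT E n (∅ : Set (Fin n → ℤ)) :=
  ⟨0, Set.univ, Empty, fun e => e.elim, pd_univ, fun e => e.elim, by simp⟩

lemma inT_univ (E : Set ℤ) (n : ℕ) : InT E n (Set.univ : Set (Fin n → ℤ)) :=
  ⟨0, Set.univ, Unit, fun _ => Set.univ, pd_univ, fun _ u _ i => i.elim0, by ext x; simp⟩

lemma InT.compl {E : Set ℤ} {n : ℕ} {A : Set (Fin n → ℤ)} (h : InT E n A) : InT E n Aᶜ := by
  obtain ⟨m, X, I, P, hX, hE, rfl⟩ := h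
  refine ⟨m, Xᶜ, (∀ α : I, P α), fun g => Set.range (fun α => (g α : Fin m → ℤ)),
    pd_compl hX, ?_, ?_⟩
  · rintro g u ⟨α, rfl⟩ i
    exact hE α _ (g α).2 i
  · ext x
    simp only [Set.mem_compl_iff, Set.mem_iUnion, Set.mem_iInter, Set.mem_setOf_eq,
      Set.mem_range, not_exists]
    constructor
    · intro h
      have h' : ∀ α, ∃ u ∈ P α, Sum.elim u x ∉ X := by
        intro α
        by_contra hc
        push_neg at hc
        exact h α fun u hu => hc u hu
      choose g hg hg' using h'
      exact ⟨fun α => ⟨g α, hg α⟩, by rintro u ⟨α, rfl⟩; exact hg' α⟩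
    · rintro ⟨g, hg⟩ α hα
      exact hg _ ⟨α, rfl⟩ (hα _ (g α).2)

lemma InT.norm {E : Set ℤ} {n : ℕ} {A : Set (Fin n → ℤ)} (h : InT E n A) :
    ∃ (m : ℕ) (X : Set ((Fin m ⊕ Fin n) → ℤ)) (I : Type) (P : I → Set (Fin m → ℤ)),
      PresburgerDef X ∧ (∀ α : I, ∀ u ∈ P α, ∀ i, u i ∈ E) ∧ (∀ α, (P α).Nonempty) ∧
      A = ⋃ α : I, ⋂ u ∈ P α, {x : Fin n → ℤ | Sum.elim u x ∈ X} := by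
  obtain ⟨m, X, I, P, hX, hE, rfl⟩ := h
  by_cases hne : ∀ α, (P α).Nonempty
  · exact ⟨m, X, I, P, hX, hE, hne, rfl⟩
  · push_neg at hne
    obtain ⟨α₀, hα₀⟩ := hne
    have huniv : ⋃ α : I, ⋂ u ∈ P α, {x : Fin n → ℤ | Sum.elim u x ∈ X} = Set.univ := by
      apply Set.eq_univ_of_univ_subset
      intro x _
      exact Set.mem_iUnion.2 ⟨α₀, by simp [hα₀]⟩
    rw [huniv]
    exact ⟨0, Set.univ, Unit, fun _ => Set.univ, pd_univ, fun _ u _ i => i.elim0,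
      fun _ => ⟨default, trivial⟩, by ext x; simp⟩

lemma InT.inter {E : Set ℤ} {n : ℕ} {A B : Set (Fin n → ℤ)} (hA : InT E n A) (hB : InT E n B) :
    InT E n (A ∩ B) := by
  obtain ⟨m₁, X₁, I₁, P₁, hX₁, hE₁, hne₁, rfl⟩ := hA.norm
  obtain ⟨m₂, X₂, I₂, P₂, hX₂, hE₂, hne₂, rfl⟩ := hB.norm
  set j₁ : Fin m₁ ⊕ Fin n → Fin (m₁ + m₂) ⊕ Fin n :=
    Sum.map (fun i => finSumFinEquiv (Sum.inl i)) id with hj₁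
  set j₂ : Fin m₂ ⊕ Fin n → Fin (m₁ + m₂) ⊕ Fin n :=
    Sum.map (fun i => finSumFinEquiv (Sum.inr i)) id with hj₂
  set pair : (Fin m₁ → ℤ) → (Fin m₂ → ℤ) → (Fin (m₁ + m₂) → ℤ) :=
    fun u₁ u₂ i => Sum.elim u₁ u₂ (finSumFinEquiv.symm i) with hpair
  have key₁ : ∀ (u₁ : Fin m₁ → ℤ) (u₂ : Fin m₂ → ℤ) (x : Fin n → ℤ),
      Sum.elim (pair u₁ u₂) x ∘ j₁ = Sum.elim u₁ x := by
    intro u₁ u₂ x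
    funext s
    cases s with
    | inl i => simp [hj₁, hpair]
    | inr i => simp [hj₁]
  have key₂ : ∀ (u₁ : Fin m₁ → ℤ) (u₂ : Fin m₂ → ℤ) (x : Fin n → ℤ),
      Sum.elim (pair u₁ u₂) x ∘ j₂ = Sum.elim u₂ x := by
    intro u₁ u₂ x
    funext s
    cases s with
    | inl i => simp [hj₂, hpair]
    | inr i => simp [hj₂]
  refine ⟨m₁ + m₂, {w | w ∘ j₁ ∈ X₁} ∩ {w | w ∘ j₂ ∈ X₂}, I₁ × I₂,
    fun p => Set.image2 pair (P₁ p.1) (P₂ p.2),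
    pd_inter (pd_relabel j₁ hX₁) (pd_relabel j₂ hX₂), ?_, ?_⟩
  · rintro ⟨α, β⟩ u ⟨u₁, hu₁, u₂, hu₂, rfl⟩ i
    rcases h : finSumFinEquiv.symm i with i₁ | i₂
    · simpa [hpair, h] using hE₁ α u₁ hu₁ i₁
    · simpa [hpair, h] using hE₂ β u₂ hu₂ i₂
  · ext x
    simp only [Set.mem_inter_iff, Set.mem_iUnion, Set.mem_iInter, Set.mem_setOf_eq]
    constructor
    · rintro ⟨⟨α, h1⟩, ⟨β, h2⟩⟩
      refine ⟨(α, β), ?_⟩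
      rintro w ⟨u₁, hu₁, u₂, hu₂, rfl⟩
      rw [key₁, key₂]
      exact ⟨h1 _ hu₁, h2 _ hu₂⟩
    · rintro ⟨⟨α, β⟩, h⟩
      obtain ⟨u₁₀, hu₁₀⟩ := hne₁ α
      obtain ⟨u₂₀, hu₂₀⟩ := hne₂ β
      constructor
      · refine ⟨α, fun u₁ hu₁ => ?_⟩
        have := h (pair u₁ u₂₀) ⟨u₁, hu₁, u₂₀, hu₂₀, rfl⟩
        rw [key₁] at this
        exact this.1
      · refine ⟨β, fun u₂ hu₂ => ?_⟩
        have := h (pair u₁₀ u₂) ⟨u₁₀, hu₁₀, u₂, hu₂, rfl⟩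
        rw [key₂] at this
        exact this.2

/-- `𝒯_n` is a Boolean algebra: it contains `∅` and `ℤ^n` and is closed under
complementation, (finite) intersections and (finite) unions. -/
theorem InT_boolean_algebra (E : Set ℤ) (n : ℕ) :
    InT E n (∅ : Set (Fin n → ℤ)) ∧
    InT E n (Set.univ : Set (Fin n → ℤ)) ∧
    (∀ A : Set (Fin n → ℤ), InT E n A → InT E n Aᶜ) ∧
    (∀ A B : Set (Fin n → ℤ), InT E n A → InT E n B → InT E n (A ∩ B)) ∧
    (∀ A B : Set (Fin n → ℤ), InT E n A → InT E n B → InT E n (A ∪ B)) := by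
  refine ⟨inT_empty E n, inT_univ E n, fun A hA => hA.compl, fun A B hA hB => hA.inter hB,
    fun A B hA hB => ?_⟩
  rw [← compl_compl (A ∪ B), Set.compl_union]
  exact (hA.compl.inter hB.compl).compl
end

section
/- Let E ⊆ ℤ, let m, n ∈ ℕ, let P ⊆ E^m, and let f_1, ..., f_m : ℤ^n → ℤ be Presburger-definable functions. Then the set {x ∈ ℤ^n : (f_1(x), ..., f_m(x)) ∈ P} belongs to 𝒯_n. -/
open FirstOrder

lemma PresburgerDef.preimage {α β : Type*} {s : Set (α → ℤ)} (h : PresburgerDef s)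
    (g : α → β) : PresburgerDef {v : β → ℤ | (fun a => v (g a)) ∈ s} := by
  letI := presburgerStr
  obtain ⟨φ, rfl⟩ := h
  exact ⟨φ.relabel g, by ext v; simp [Language.Formula.realize_relabel, Function.comp_def]⟩

lemma PresburgerDef.iInter {β : Type*} {k : ℕ} {s : Fin k → Set (β → ℤ)}
    (h : ∀ i, PresburgerDef (s i)) : PresburgerDef (⋂ i, s i) := by
  letI := presburgerStr
  induction k with
  | zero => exact ⟨⊤, by ext v; simp⟩
  | succ k ih =>
    obtain ⟨φ, hφ⟩ := h 0
    obtain ⟨ψ, hψ⟩ := ih (fun i => h i.succ)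
    refine ⟨φ ⊓ ψ, ?_⟩
    ext v
    simp only [Set.mem_iInter, Set.mem_setOf_eq, Language.Formula.realize_inf]
    rw [← Set.mem_setOf_eq (p := fun v => φ.Realize v), ← hφ,
      ← Set.mem_setOf_eq (p := fun v => ψ.Realize v), ← hψ]
    simp only [Set.mem_iInter]
    exact ⟨fun H => ⟨H 0, fun i => H i.succ⟩, fun ⟨h0, hs⟩ i => Fin.cases h0 hs i⟩

/-- For `P ⊆ E^m` and Presburger-definable functions `f₁, …, f_m : ℤ^n → ℤ`,
the set `{x ∈ ℤ^n : (f₁(x), …, f_m(x)) ∈ P}` belongs to `𝒯_n`. -/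
theorem preimage_mem_InT (E : Set ℤ) (m n : ℕ)
    (P : Set (Fin m → ℤ)) (hP : ∀ u ∈ P, ∀ i, u i ∈ E)
    (f : Fin m → (Fin n → ℤ) → ℤ) (hf : ∀ i, PresburgerFun (f i)) :
    InT E n {x : Fin n → ℤ | (fun i => f i x) ∈ P} := by
  refine ⟨m, ⋂ i : Fin m, {w : Fin m ⊕ Fin n → ℤ | w (Sum.inl i) = f i (fun j => w (Sum.inr j))},
    P, fun u => ({(u : Fin m → ℤ)} : Set (Fin m → ℤ)), ?_, ?_, ?_⟩
  · refine PresburgerDef.iInter (fun i => ?_)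
    have := (hf i).preimage (β := Fin m ⊕ Fin n)
      (Sum.elim Sum.inr (fun _ => Sum.inl i))
    simpa using this
  · rintro u v rfl i
    exact hP u u.2 i
  · ext x
    simp only [Set.mem_setOf_eq, Set.mem_iUnion, Set.mem_iInter, Set.mem_singleton_iff]
    constructor
    · intro hx
      exact ⟨⟨_, hx⟩, fun u hu => by subst hu; simp⟩
    · rintro ⟨⟨u, hu⟩, h⟩
      have := h u rfl
      simp only [Set.mem_iInter, Set.mem_setOf_eq, Sum.elim_inl, Sum.elim_inr] at this
      have : u = fun i => f i x := funext this
      rwa [← this]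
end

section
/- Let A, B ⊆ ℤ^m × ℤ^{n+1} be weak cells (in ℤ^{(m+n)+1}, regarding the first m+n coordinates as the base). Then the diamond product A ⋄ B = {(x, y, z) ∈ ℤ^m × ℤ^m × ℤ^{n+1} : (x, z) ∈ A and (y, z) ∈ B} is a weak cell in ℤ^{2m+n+1}. -/
open FirstOrder

/-- A weak cell in `ℤ^α × ℤ`: one of the four forms
(i) `S × {t : t ≡ k (mod N)}`;
(ii) `{(x, t) : x ∈ S, f(x) ≤ t, t ≡ k (mod N)}`;
(iii) `{(x, t) : x ∈ S, t ≤ g(x), t ≡ k (mod N)}`;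
(iv) `{(x, t) : x ∈ S, f(x) ≤ t ≤ g(x), t ≡ k (mod N)}`,
with `S`, `f`, `g` Presburger and `k, N ∈ ℤ`. -/
def IsWeakCell {α : Type*} (C : Set ((α → ℤ) × ℤ)) : Prop :=
  ∃ (S : Set (α → ℤ)) (k N : ℤ), PresburgerDef S ∧
    (C = {p | p.1 ∈ S ∧ p.2 ≡ k [ZMOD N]} ∨
     (∃ f : (α → ℤ) → ℤ, PresburgerFun f ∧
       C = {p | p.1 ∈ S ∧ f p.1 ≤ p.2 ∧ p.2 ≡ k [ZMOD N]}) ∨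
     (∃ g : (α → ℤ) → ℤ, PresburgerFun g ∧
       C = {p | p.1 ∈ S ∧ p.2 ≤ g p.1 ∧ p.2 ≡ k [ZMOD N]}) ∨
     (∃ f g : (α → ℤ) → ℤ, PresburgerFun f ∧ PresburgerFun g ∧
       C = {p | p.1 ∈ S ∧ f p.1 ≤ p.2 ∧ p.2 ≤ g p.1 ∧ p.2 ≡ k [ZMOD N]}))

/-!
Pulling back a weak cell along a relabelling of the base coordinates is again a weak cell, and so is
the intersection of two weak cells over the same base: the base sets intersect, the lower bounds
combine by `max`, the upper bounds by `min`, and by the Chinese remainder theorem the two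
congruences either are incompatible (the intersection is empty) or combine into one congruence
modulo the lcm. The diamond product is the intersection of the pullbacks of `A` and `B` along the
two projections `(x, y, z) ↦ (x, z)` and `(x, y, z) ↦ (y, z)`.
-/

open FirstOrder Language

theorem Option.forall_mem_merge {α : Type*} {φ : α → α → α} {P : α → Prop}
    (hφ : ∀ a b, P (φ a b) ↔ P a ∧ P b) {o₁ o₂ : Option α} :
    (∀ x ∈ o₁.merge φ o₂, P x) ↔ (∀ x ∈ o₁, P x) ∧ (∀ x ∈ o₂, P x) := by
  cases o₁ <;> cases o₂ <;> simp [hφ]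

theorem Option.forall_mem_merge_of_forall {α : Type*} {φ : α → α → α} {P : α → Prop}
    (hφ : ∀ a b, P a → P b → P (φ a b)) {o₁ o₂ : Option α}
    (h₁ : ∀ x ∈ o₁, P x) (h₂ : ∀ x ∈ o₂, P x) : ∀ x ∈ o₁.merge φ o₂, P x := by
  cases o₁ <;> cases o₂ <;> simp_all

section Presburger

variable {α β : Type*}

theorem presburgerDef_iff_definable {s : Set (α → ℤ)} :
    PresburgerDef s ↔ (letI := presburgerStr; (∅ : Set ℤ).Definable presburgerLang s) :=
  letI := presburgerStr
  Set.empty_definable_iff.symm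

theorem PresburgerDef.empty : PresburgerDef (∅ : Set (α → ℤ)) :=
  letI := presburgerStr
  presburgerDef_iff_definable.2 Set.definable_empty

theorem PresburgerDef.inter {s t : Set (α → ℤ)} (hs : PresburgerDef s) (ht : PresburgerDef t) :
    PresburgerDef (s ∩ t) :=
  letI := presburgerStr
  presburgerDef_iff_definable.2
    ((presburgerDef_iff_definable.1 hs).inter (presburgerDef_iff_definable.1 ht))

theorem PresburgerDef.union {s t : Set (α → ℤ)} (hs : PresburgerDef s) (ht : PresburgerDef t) :
    PresburgerDef (s ∪ t) :=
  letI := presburgerStr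
  presburgerDef_iff_definable.2
    ((presburgerDef_iff_definable.1 hs).union (presburgerDef_iff_definable.1 ht))

theorem PresburgerDef.preimage_comp {s : Set (α → ℤ)} (hs : PresburgerDef s) (ρ : α → β) :
    PresburgerDef ((fun w : β → ℤ => w ∘ ρ) ⁻¹' s) :=
  letI := presburgerStr
  presburgerDef_iff_definable.2 ((presburgerDef_iff_definable.1 hs).preimage_comp ρ)

theorem PresburgerDef.image_comp [Finite α] [Finite β] {s : Set (β → ℤ)} (hs : PresburgerDef s)
    (ρ : α → β) : PresburgerDef ((fun w : β → ℤ => w ∘ ρ) '' s) :=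
  letI := presburgerStr
  presburgerDef_iff_definable.2 ((presburgerDef_iff_definable.1 hs).image_comp ρ)

theorem presburgerDef_setOf_le (i j : α) : PresburgerDef {v : α → ℤ | v i ≤ v j} := by
  let := presburgerStr
  refine ⟨∼(Relations.formula (L := presburgerLang) (n := 2) () ![Term.var j, Term.var i]), ?_⟩
  ext v
  exact (not_lt : ¬v j < v i ↔ v i ≤ v j).symm

theorem PresburgerFun.reindex {f : (α → ℤ) → ℤ} (hf : PresburgerFun f) (ρ : α → β) :
    PresburgerFun (fun w : β → ℤ => f (w ∘ ρ)) :=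
  hf.preimage_comp (Sum.map ρ id)

theorem PresburgerFun.presburgerDef_rel [Finite α] {f : (α → ℤ) → ℤ} (hf : PresburgerFun f)
    {R : ℤ → ℤ → Prop} (hR : PresburgerDef {u : Fin 2 → ℤ | R (u 0) (u 1)}) :
    PresburgerDef {v : α ⊕ Unit → ℤ | R (f (v ∘ Sum.inl)) (v (Sum.inr ()))} := by
  -- adjoin the value of `f` as an extra coordinate, then project it away
  have hgraph := hf.preimage_comp (Sum.map Sum.inl id : α ⊕ Unit → (α ⊕ Unit) ⊕ Unit)
  have hrel := hR.preimage_comp (![Sum.inr (), Sum.inl (Sum.inr ())] : Fin 2 → (α ⊕ Unit) ⊕ Unit)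
  convert (hgraph.inter hrel).image_comp Sum.inl using 1
  ext v
  constructor
  · intro hv
    exact ⟨Sum.elim v fun _ => f (v ∘ Sum.inl), ⟨rfl, hv⟩, rfl⟩
  · rintro ⟨w, ⟨hw, hwR⟩, rfl⟩
    have hw : w (Sum.inr ()) = f fun i => w (Sum.inl (Sum.inl i)) := hw
    have hwR : R (w (Sum.inr ())) (w (Sum.inl (Sum.inr ()))) := hwR
    rw [hw] at hwR
    exact hwR

theorem PresburgerFun.max [Finite α] {f g : (α → ℤ) → ℤ} (hf : PresburgerFun f)
    (hg : PresburgerFun g) : PresburgerFun fun x => max (f x) (g x) := by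
  have hle {h : (α → ℤ) → ℤ} (hh : PresburgerFun h) :=
    hh.presburgerDef_rel (R := (· ≤ ·)) (presburgerDef_setOf_le (0 : Fin 2) 1)
  unfold PresburgerFun
  convert (hf.inter (hle hg)).union (hg.inter (hle hf)) using 1
  ext v
  simp only [Set.mem_ofPred_eq, Set.mem_inter_iff, Set.mem_union, Function.comp_def]
  omega

theorem PresburgerFun.min [Finite α] {f g : (α → ℤ) → ℤ} (hf : PresburgerFun f)
    (hg : PresburgerFun g) : PresburgerFun fun x => min (f x) (g x) := by
  have hge {h : (α → ℤ) → ℤ} (hh : PresburgerFun h) :=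
    hh.presburgerDef_rel (R := fun a b => b ≤ a) (presburgerDef_setOf_le (1 : Fin 2) 0)
  unfold PresburgerFun
  convert (hf.inter (hge hg)).union (hg.inter (hge hf)) using 1
  ext v
  simp only [Set.mem_ofPred_eq, Set.mem_inter_iff, Set.mem_union, Function.comp_def]
  omega

end Presburger

section WeakCell

variable {α β : Type*}

/-- The four shapes of `IsWeakCell` in one: `none` stands for an absent bound. -/
def weakCellOf (S : Set (α → ℤ)) (k N : ℤ) (F G : Option ((α → ℤ) → ℤ)) :
    Set ((α → ℤ) × ℤ) :=
  {p | p.1 ∈ S ∧ (∀ f ∈ F, f p.1 ≤ p.2) ∧ (∀ g ∈ G, p.2 ≤ g p.1) ∧ p.2 ≡ k [ZMOD N]}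

theorem isWeakCell_iff_exists_weakCellOf {C : Set ((α → ℤ) × ℤ)} :
    IsWeakCell C ↔ ∃ (S : Set (α → ℤ)) (k N : ℤ) (F G : Option ((α → ℤ) → ℤ)),
      PresburgerDef S ∧ (∀ f ∈ F, PresburgerFun f) ∧ (∀ g ∈ G, PresburgerFun g) ∧
        C = weakCellOf S k N F G := by
  constructor
  · rintro ⟨S, k, N, hS, rfl | ⟨f, hf, rfl⟩ | ⟨g, hg, rfl⟩ | ⟨f, g, hf, hg, rfl⟩⟩
    · exact ⟨S, k, N, none, none, hS, by simp, by simp, by simp [weakCellOf]⟩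
    · exact ⟨S, k, N, some f, none, hS, by simpa, by simp, by simp [weakCellOf]⟩
    · exact ⟨S, k, N, none, some g, hS, by simp, by simpa, by simp [weakCellOf]⟩
    · exact ⟨S, k, N, some f, some g, hS, by simpa, by simpa, by simp [weakCellOf]⟩
  · rintro ⟨S, k, N, _ | f, _ | g, hS, hF, hG, rfl⟩
    · exact ⟨S, k, N, hS, .inl (by simp [weakCellOf])⟩
    · exact ⟨S, k, N, hS, .inr (.inr (.inl ⟨g, by simpa using hG, by simp [weakCellOf]⟩))⟩
    · exact ⟨S, k, N, hS, .inr (.inl ⟨f, by simpa using hF, by simp [weakCellOf]⟩)⟩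
    · exact ⟨S, k, N, hS, .inr (.inr (.inr
        ⟨f, g, by simpa using hF, by simpa using hG, by simp [weakCellOf]⟩))⟩

theorem preimage_weakCellOf (ρ : α → β) (S : Set (α → ℤ)) (k N : ℤ)
    (F G : Option ((α → ℤ) → ℤ)) :
    (fun p : (β → ℤ) × ℤ => (p.1 ∘ ρ, p.2)) ⁻¹' weakCellOf S k N F G =
      weakCellOf ((· ∘ ρ) ⁻¹' S) k N (F.map fun f w => f (w ∘ ρ))
        (G.map fun g w => g (w ∘ ρ)) := by
  ext p
  simp [weakCellOf]

theorem weakCellOf_inter_weakCellOf {S S' : Set (α → ℤ)} {k k' k'' N N' N'' : ℤ}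
    {F F' G G' : Option ((α → ℤ) → ℤ)}
    (hk : ∀ t, t ≡ k [ZMOD N] ∧ t ≡ k' [ZMOD N'] ↔ t ≡ k'' [ZMOD N'']) :
    weakCellOf S k N F G ∩ weakCellOf S' k' N' F' G' =
      weakCellOf (S ∩ S') k'' N'' (F.merge (fun f f' x => max (f x) (f' x)) F')
        (G.merge (fun g g' x => min (g x) (g' x)) G') := by
  ext ⟨x, t⟩
  have hF := Option.forall_mem_merge (φ := fun f f' x => max (f x) (f' x))
    (P := fun f => f x ≤ t) (o₁ := F) (o₂ := F') fun _ _ => max_le_iff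
  have hG := Option.forall_mem_merge (φ := fun g g' x => min (g x) (g' x))
    (P := fun g => t ≤ g x) (o₁ := G) (o₂ := G') fun _ _ => le_min_iff
  beta_reduce at hF hG
  simp only [weakCellOf, Set.mem_inter_iff, Set.mem_ofPred_eq, hF, hG, ← hk]
  tauto

theorem IsWeakCell.empty : IsWeakCell (∅ : Set ((α → ℤ) × ℤ)) :=
  ⟨∅, 0, 1, .empty, .inl (by simp)⟩

theorem IsWeakCell.preimage_comp {C : Set ((α → ℤ) × ℤ)} (hC : IsWeakCell C) (ρ : α → β) :
    IsWeakCell ((fun p : (β → ℤ) × ℤ => (p.1 ∘ ρ, p.2)) ⁻¹' C) := by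
  obtain ⟨S, k, N, F, G, hS, hF, hG, rfl⟩ := isWeakCell_iff_exists_weakCellOf.1 hC
  rw [preimage_weakCellOf]
  exact isWeakCell_iff_exists_weakCellOf.2 ⟨_, k, N, _, _, hS.preimage_comp ρ,
    Option.forall_mem_map.2 fun f hf => (hF f hf).reindex ρ,
    Option.forall_mem_map.2 fun g hg => (hG g hg).reindex ρ, rfl⟩

theorem IsWeakCell.inter [Finite α] {C D : Set ((α → ℤ) × ℤ)} (hC : IsWeakCell C)
    (hD : IsWeakCell D) : IsWeakCell (C ∩ D) := by
  obtain ⟨S, k, N, F, G, hS, hF, hG, rfl⟩ := isWeakCell_iff_exists_weakCellOf.1 hC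
  obtain ⟨S', k', N', F', G', hS', hF', hG', rfl⟩ := isWeakCell_iff_exists_weakCellOf.1 hD
  by_cases hcompat : ∃ t₀, t₀ ≡ k [ZMOD N] ∧ t₀ ≡ k' [ZMOD N']
  · obtain ⟨t₀, h₀, h₀'⟩ := hcompat
    have hk (t : ℤ) : t ≡ k [ZMOD N] ∧ t ≡ k' [ZMOD N'] ↔ t ≡ t₀ [ZMOD N.lcm N'] := by
      rw [← Int.modEq_and_modEq_iff_modEq_lcm]
      exact and_congr ⟨fun h => h.trans h₀.symm, fun h => h.trans h₀⟩
        ⟨fun h => h.trans h₀'.symm, fun h => h.trans h₀'⟩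
    rw [weakCellOf_inter_weakCellOf hk]
    exact isWeakCell_iff_exists_weakCellOf.2 ⟨_, _, _, _, _, hS.inter hS',
      Option.forall_mem_merge_of_forall (fun _ _ => PresburgerFun.max) hF hF',
      Option.forall_mem_merge_of_forall (fun _ _ => PresburgerFun.min) hG hG', rfl⟩
  · convert IsWeakCell.empty
    exact Set.eq_empty_of_forall_notMem fun p ⟨hpC, hpD⟩ => hcompat ⟨p.2, hpC.2.2.2, hpD.2.2.2⟩

end WeakCell

/-- If `A, B ⊆ ℤ^m × ℤ^{n+1}` are weak cells (with base `ℤ^{m+n}`), then the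
diamond product `A ⋄ B = {(x, y, z) : (x, z) ∈ A ∧ (y, z) ∈ B}` is a weak cell
in `ℤ^{2m+n+1}`. -/
theorem diamond_of_weakCells (m n : ℕ)
    (A B : Set (((Fin m ⊕ Fin n) → ℤ) × ℤ))
    (hA : IsWeakCell A) (hB : IsWeakCell B) :
    IsWeakCell {p : ((Fin m ⊕ (Fin m ⊕ Fin n)) → ℤ) × ℤ |
      (Sum.elim (fun i => p.1 (Sum.inl i)) (fun j => p.1 (Sum.inr (Sum.inr j))), p.2) ∈ A ∧
      (Sum.elim (fun i => p.1 (Sum.inr (Sum.inl i))) (fun j => p.1 (Sum.inr (Sum.inr j))), p.2) ∈ B} := by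
  convert (hA.preimage_comp (Sum.elim Sum.inl (Sum.inr ∘ Sum.inr))).inter
    (hB.preimage_comp (Sum.inr : Fin m ⊕ Fin n → Fin m ⊕ (Fin m ⊕ Fin n))) using 1
  ext ⟨x, t⟩
  rw [Set.mem_inter_iff, Set.mem_preimage, Set.mem_preimage, Sum.comp_elim,
    ← Sum.elim_comp_inl_inr (x ∘ Sum.inr)]
  rfl
end

section
/- Let C_1, ..., C_{k+1} ⊆ ℤ^m × ℤ^n, and let (P_α)_{α ∈ I} be a family of subsets of ℤ^m. Then ⋃_{α ∈ I} ⋂_{u ∈ P_α} (C_1 ∪ ... ∪ C_{k+1})_u is equal to the union of the following three sets: (1) ⋃_{α ∈ I} ⋂_{u ∈ P_α} (C_1 ∪ ... ∪ C_k)_u; (2) ⋃_{α ∈ I} ⋂_{u ∈ P_α} (C_{k+1})_u; (3) ⋃_{α ∈ I} ⋃_{(P_{α,1}, P_{α,2})} ⋂_{(v, w) ∈ P_{α,1} × P_{α,2}} ((C_1 ⋄ C_{k+1}) ∪ ... ∪ (C_k ⋄ C_{k+1}))_{(v,w)}, where for each α ∈ I the inner union in (3) ranges over all partitions of P_α into two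 (nonempty disjoint) sets P_{α,1}, P_{α,2} with P_{α,1} ∪ P_{α,2} = P_α. -/
/-- Lemma on decomposing unions of intersections of fibers of a union of sets:
`⋃_α ⋂_{u ∈ P_α} (C₁ ∪ … ∪ C_{k+1})_u` equals the union of
(1) `⋃_α ⋂_{u ∈ P_α} (C₁ ∪ … ∪ C_k)_u`,
(2) `⋃_α ⋂_{u ∈ P_α} (C_{k+1})_u`, and
(3) `⋃_α ⋃_{(P_{α,1}, P_{α,2})} ⋂_{(v,w) ∈ P_{α,1} × P_{α,2}}
      ((C₁ ⋄ C_{k+1}) ∪ … ∪ (C_k ⋄ C_{k+1}))_{(v,w)}`,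
where the inner union in (3) is over partitions of `P_α` into two nonempty
disjoint sets, and `A ⋄ B = {(v, w, x) : (v, x) ∈ A ∧ (w, x) ∈ B}`. -/
theorem union_inter_fiber_decomposition (m n k : ℕ)
    (C : Fin (k + 1) → Set ((Fin m → ℤ) × (Fin n → ℤ)))
    (I : Type*) (P : I → Set (Fin m → ℤ)) :
    (⋃ α : I, ⋂ u ∈ P α, {x : Fin n → ℤ | (u, x) ∈ ⋃ i, C i}) =
      (⋃ α : I, ⋂ u ∈ P α, {x : Fin n → ℤ | (u, x) ∈ ⋃ i : Fin k, C i.castSucc}) ∪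
      (⋃ α : I, ⋂ u ∈ P α, {x : Fin n → ℤ | (u, x) ∈ C (Fin.last k)}) ∪
      (⋃ α : I, ⋃ P₁ : Set (Fin m → ℤ), ⋃ P₂ : Set (Fin m → ℤ),
        ⋃ _ : P₁ ∪ P₂ = P α ∧ Disjoint P₁ P₂ ∧ P₁.Nonempty ∧ P₂.Nonempty,
          ⋂ v ∈ P₁, ⋂ w ∈ P₂,
            {x : Fin n → ℤ | ∃ i : Fin k, (v, x) ∈ C i.castSucc ∧ (w, x) ∈ C (Fin.last k)}) := by
  ext x
  simp only [Set.mem_iUnion, Set.mem_iInter, Set.mem_setOf_eq, Set.mem_union]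
  constructor
  · rintro ⟨α, hα⟩
    set P₁ : Set (Fin m → ℤ) := {u ∈ P α | ∃ i : Fin k, (u, x) ∈ C i.castSucc} with hP₁
    set P₂ : Set (Fin m → ℤ) := P α \ P₁ with hP₂
    have hP2last : ∀ w ∈ P₂, (w, x) ∈ C (Fin.last k) := by
      intro w hw
      obtain ⟨i, hi⟩ := hα w hw.1
      rcases Fin.eq_castSucc_or_eq_last i with ⟨j, rfl⟩ | rfl
      · exact absurd ⟨hw.1, j, hi⟩ hw.2
      · exact hi
    by_cases h1 : P₁.Nonempty
    · by_cases h2 : P₂.Nonempty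
      · refine Or.inr ⟨α, P₁, P₂, ⟨?_, ?_, h1, h2⟩, ?_⟩
        · rw [hP₂]
          exact Set.union_diff_cancel' (le_refl _) (fun u hu => hu.1)
        · exact Set.disjoint_sdiff_right
        · intro v hv w hw
          obtain ⟨_, i, hi⟩ := hv
          exact ⟨i, hi, hP2last w hw⟩
      · -- P₂ empty, so all of P α in P₁
        refine Or.inl (Or.inl ⟨α, fun u hu => ?_⟩)
        by_contra hc
        exact h2 ⟨u, hu, fun h => hc h.2⟩
    · -- P₁ empty: everything goes to last
      refine Or.inl (Or.inr ⟨α, fun u hu => ?_⟩)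
      exact hP2last u ⟨hu, fun h => h1 ⟨u, h⟩⟩
  · rintro ((⟨α, hα⟩ | ⟨α, hα⟩) | ⟨α, P₁, P₂, hh⟩)
    · exact ⟨α, fun u hu => by obtain ⟨i, hi⟩ := hα u hu; exact ⟨i.castSucc, hi⟩⟩
    · exact ⟨α, fun u hu => ⟨Fin.last k, hα u hu⟩⟩
    · obtain ⟨⟨heq, _, ⟨v₀, hv₀⟩, ⟨w₀, hw₀⟩⟩, h⟩ := hh
      refine ⟨α, fun u hu => ?_⟩
      rw [← heq] at hu
      rcases hu with hu | hu
      · obtain ⟨i, hi, _⟩ := h u hu w₀ hw₀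
        exact ⟨i.castSucc, hi⟩
      · obtain ⟨_, _, hi⟩ := h v₀ hv₀ u hu
        exact ⟨Fin.last k, hi⟩
end

section
/- Fix E ⊆ ℤ and n ∈ ℕ. The projection of any set in 𝒮_{n+1} onto its first n coordinates is a set in 𝒯_n. -/
open FirstOrder

/-- `A ∈ 𝒮_{n+1}`: there are `m ∈ ℕ`, a weak cell `C ⊆ ℤ^{m+n} × ℤ`, and an
indexed family `(P_α)_{α ∈ I}` of subsets of `E^m` with
`A = ⋃_{α ∈ I} ⋂_{u ∈ P_α} C_u` (identifying `ℤ^{n+1}` with `ℤ^n × ℤ`);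
`𝒮_0` consists of all subsets of `ℤ^0`. -/
def InS (E : Set ℤ) : (n : ℕ) → Set (Fin n → ℤ) → Prop
  | 0, _ => True
  | (n + 1), A =>
      ∃ (m : ℕ) (C : Set (((Fin m ⊕ Fin n) → ℤ) × ℤ)) (I : Type)
        (P : I → Set (Fin m → ℤ)),
        IsWeakCell C ∧ (∀ α : I, ∀ u ∈ P α, ∀ i, u i ∈ E) ∧
        A = ⋃ α : I, ⋂ u ∈ P α,
          {x : Fin (n + 1) → ℤ |
            (Sum.elim u (fun j : Fin n => x j.castSucc), x (Fin.last n)) ∈ C}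

/-!
For `x ∈ ℤ^n` and one index `α` of the union, the fibre over `x` of `⋂_{u ∈ P_α} C_u` is
`R ∩ ⋂_u J_u`, with `R` the residue class of the cell and each `J_u` an interval of `ℤ`.
If a nonempty family of intervals of `ℤ` has a common point, two of its members (one with
largest lower end, one with smallest upper end) already have intersection contained in all the
others. So `x` lies in the projection iff for some `u₀, u₁ ∈ P_α` and all `u ∈ P_α`, the fibre
`C_{u₀,x} ∩ C_{u₁,x}` is nonempty and contained in `C_{u,x}`. That condition on `(u₀, u₁, u, x)`
is first-order, which exhibits the projection as a set of `𝒯_n` with parameters in `E^{3m}`.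
-/

open FirstOrder Language

namespace PresburgerDef

variable {α β : Type*}

theorem inter_s16 {s t : Set (α → ℤ)} (hs : PresburgerDef s) (ht : PresburgerDef t) :
    PresburgerDef (s ∩ t) := by
  let := presburgerStr
  obtain ⟨φ, rfl⟩ := hs
  obtain ⟨ψ, rfl⟩ := ht
  exact ⟨φ ⊓ ψ, by ext; simp⟩

theorem union_s16 {s t : Set (α → ℤ)} (hs : PresburgerDef s) (ht : PresburgerDef t) :
    PresburgerDef (s ∪ t) := by
  let := presburgerStr
  obtain ⟨φ, rfl⟩ := hs
  obtain ⟨ψ, rfl⟩ := ht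
  exact ⟨φ ⊔ ψ, by ext; simp⟩

theorem compl {s : Set (α → ℤ)} (hs : PresburgerDef s) : PresburgerDef sᶜ := by
  let := presburgerStr
  obtain ⟨φ, rfl⟩ := hs
  exact ⟨φ.not, by ext; simp⟩

theorem iInter_s16 {ι : Type*} [Finite ι] {s : ι → Set (α → ℤ)} (hs : ∀ i, PresburgerDef (s i)) :
    PresburgerDef (⋂ i, s i) := by
  let := presburgerStr
  choose φ hφ using hs
  exact ⟨Formula.iInf φ, by ext; simp [hφ]⟩

theorem relabel {s : Set (α → ℤ)} (hs : PresburgerDef s) (ρ : α → β) :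
    PresburgerDef {v : β → ℤ | (fun a => v (ρ a)) ∈ s} := by
  let := presburgerStr
  obtain ⟨φ, rfl⟩ := hs
  exact ⟨φ.relabel ρ, by ext; simp [Function.comp_def]⟩

theorem exists_sum [Finite β] {s : Set (α ⊕ β → ℤ)} (hs : PresburgerDef s) :
    PresburgerDef {v : α → ℤ | ∃ w : β → ℤ, Sum.elim v w ∈ s} := by
  let := presburgerStr
  obtain ⟨φ, rfl⟩ := hs
  exact ⟨φ.iExs β, by ext; simp⟩

theorem exists_int {s : Set (α ⊕ Unit → ℤ)} (hs : PresburgerDef s) :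
    PresburgerDef {v : α → ℤ | ∃ t : ℤ, Sum.elim v (fun _ => t) ∈ s} := by
  convert hs.exists_sum using 3 with v
  exact ⟨fun ⟨t, ht⟩ => ⟨_, ht⟩, fun ⟨w, hw⟩ => ⟨w (), by convert hw⟩⟩

theorem forall_int {s : Set (α ⊕ Unit → ℤ)} (hs : PresburgerDef s) :
    PresburgerDef {v : α → ℤ | ∀ t : ℤ, Sum.elim v (fun _ => t) ∈ s} := by
  convert hs.compl.exists_int.compl using 1
  ext v
  simp

theorem setOf_coord_lt (i j : α) : PresburgerDef {v : α → ℤ | v i < v j} := by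
  let := presburgerStr
  exact ⟨Relations.formula₂ () (Term.var i) (Term.var j), rfl⟩

theorem setOf_coord_eq (i j : α) : PresburgerDef {v : α → ℤ | v i = v j} := by
  let := presburgerStr
  exact ⟨Term.equal (Term.var i) (Term.var j), by ext; simp⟩

theorem setOf_coord_add_eq (i j l : α) : PresburgerDef {v : α → ℤ | v i + v j = v l} := by
  let := presburgerStr
  exact ⟨Term.equal (Functions.apply₂ () (Term.var i) (Term.var j)) (Term.var l), by
    ext; simp [Term.equal]; rfl⟩

end PresburgerDef

namespace PresburgerFun

variable {α β : Type*} {F G : (α → ℤ) → ℤ}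

theorem comp (hF : PresburgerFun F) (ρ : α → β) :
    PresburgerFun fun v : β → ℤ => F fun a => v (ρ a) :=
  hF.relabel (Sum.map ρ id)

theorem coord (i : α) : PresburgerFun fun v : α → ℤ => v i :=
  PresburgerDef.setOf_coord_eq _ _

end PresburgerFun

namespace PresburgerDef

variable {α β : Type*}

theorem preimage_s16 [Finite β] {s : Set (β → ℤ)} (hs : PresburgerDef s)
    {F : β → (α → ℤ) → ℤ} (hF : ∀ b, PresburgerFun (F b)) :
    PresburgerDef {v | (fun b => F b v) ∈ s} := by
  have graphs : PresburgerDef (⋂ b, {u : α ⊕ β → ℤ | u (.inr b) = F b fun a => u (.inl a)}) :=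
    iInter_s16 fun b => (hF b).relabel (Sum.elim Sum.inl fun _ => Sum.inr b)
  convert (graphs.inter_s16 (hs.relabel Sum.inr)).exists_sum using 3 with v
  simp only [Set.mem_inter_iff, Set.mem_iInter, Set.mem_ofPred_eq, Sum.elim_inr, Sum.elim_inl]
  exact ⟨fun h => ⟨_, fun _ => rfl, h⟩, fun ⟨w, hw, h⟩ => by rwa [← funext hw]⟩

theorem setOf_le {F G : (α → ℤ) → ℤ} (hF : PresburgerFun F) (hG : PresburgerFun G) :
    PresburgerDef {v | F v ≤ G v} := by
  convert (setOf_coord_lt (1 : Fin 2) 0).compl.preimage_s16 (F := ![F, G]) (by simpa using ⟨hF, hG⟩)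
  simp

theorem setOf_eq {F G : (α → ℤ) → ℤ} (hF : PresburgerFun F) (hG : PresburgerFun G) :
    PresburgerDef {v | F v = G v} := by
  convert (setOf_coord_eq (0 : Fin 2) 1).preimage_s16 (F := ![F, G]) (by simpa using ⟨hF, hG⟩)
  simp

end PresburgerDef

namespace PresburgerFun

open PresburgerDef

variable {α : Type*} {F G : (α → ℤ) → ℤ}

theorem add (hF : PresburgerFun F) (hG : PresburgerFun G) :
    PresburgerFun fun v => F v + G v := by
  unfold PresburgerFun
  convert (setOf_coord_add_eq (0 : Fin 3) 1 2).preimage_s16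
    (F := ![fun u : α ⊕ Unit → ℤ => F fun a => u (Sum.inl a),
      fun u => G fun a => u (Sum.inl a), fun u => u (Sum.inr ())])
    (by simpa [Fin.forall_fin_succ] using ⟨hF.comp _, hG.comp _, coord _⟩) using 2 with u
  simp [eq_comm]

theorem const_zero : PresburgerFun fun _ : α → ℤ => (0 : ℤ) := by
  unfold PresburgerFun
  convert setOf_coord_add_eq (α := α ⊕ Unit) (.inr ()) (.inr ()) (.inr ()) using 2
  simp

theorem neg (hF : PresburgerFun F) : PresburgerFun fun v => -F v := by
  unfold PresburgerFun
  convert (setOf_coord_add_eq (0 : Fin 3) 1 2).preimage_s16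
    (F := ![fun u : α ⊕ Unit → ℤ => u (Sum.inr ()), fun u => F fun a => u (Sum.inl a),
      fun _ => 0])
    (by simpa [Fin.forall_fin_succ] using ⟨coord _, hF.comp _, const_zero⟩) using 2 with u
  simp [eq_neg_iff_add_eq_zero]

theorem const_one : PresburgerFun fun _ : α → ℤ => (1 : ℤ) := by
  unfold PresburgerFun
  have pos : PresburgerDef {u : α ⊕ Unit → ℤ | ¬u (Sum.inr ()) ≤ 0} :=
    (setOf_le (coord _) const_zero).compl
  have least : PresburgerDef {u : α ⊕ Unit → ℤ | ∀ z : ℤ, z ≤ 0 ∨ u (Sum.inr ()) ≤ z} :=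
    ((setOf_le (coord (Sum.inr ())) const_zero).union_s16
      (setOf_le (coord (Sum.inl (Sum.inr ()))) (coord (Sum.inr ())))).forall_int
  convert pos.inter_s16 least using 1
  ext u
  simp only [Set.mem_ofPred_eq, Set.mem_inter_iff]
  refine ⟨fun h => ⟨by omega, fun z => by omega⟩, fun ⟨h₁, h₂⟩ => ?_⟩
  have := h₂ (u (Sum.inr ()) - 1)
  omega

theorem const_natCast (c : ℕ) : PresburgerFun fun _ : α → ℤ => (c : ℤ) := by
  induction c with
  | zero => simpa using const_zero
  | succ c ih => simpa using ih.add const_one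

theorem const (c : ℤ) : PresburgerFun fun _ : α → ℤ => c := by
  cases c with
  | ofNat c => exact const_natCast c
  | negSucc c => simpa [Int.negSucc_eq] using (const_natCast (c + 1)).neg

theorem natCast_mul (hF : PresburgerFun F) (c : ℕ) :
    PresburgerFun fun v => (c : ℤ) * F v := by
  induction c with
  | zero => simpa using const_zero
  | succ c ih => simpa [add_one_mul] using ih.add hF

end PresburgerFun

theorem PresburgerDef.setOf_modEq {α : Type*} {F : (α → ℤ) → ℤ} (hF : PresburgerFun F)
    (k N : ℤ) : PresburgerDef {v | F v ≡ k [ZMOD N]} := by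
  have graph : PresburgerDef {u : α ⊕ Unit → ℤ |
      (F fun a => u (Sum.inl a)) = k + N.natAbs * u (Sum.inr ())} :=
    setOf_eq (hF.comp _) ((PresburgerFun.const k).add ((PresburgerFun.coord _).natCast_mul _))
  convert graph.exists_int using 1
  ext v
  rw [Set.mem_ofPred_eq, ← Int.modEq_natAbs, Int.modEq_comm, Int.modEq_iff_dvd]
  simp [dvd_def, sub_eq_iff_eq_add']

theorem Set.OrdConnected.exists_inter_Iic_subset {α ι : Type*} [LinearOrder α] [SuccOrder α]
    [IsSuccArchimedean α] {P : Set ι} (hP : P.Nonempty) {J : ι → Set α}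
    (hJ : ∀ u, (J u).OrdConnected) {t : α} (ht : ∀ u ∈ P, t ∈ J u) :
    ∃ u₀ ∈ P, ∀ u ∈ P, J u₀ ∩ Iic t ⊆ J u := by
  by_cases hZ : {s | s ≤ t ∧ ∃ u ∈ P, s ∉ J u}.Nonempty
  · obtain ⟨s₀, ⟨hs₀t, u₀, hu₀, hs₀⟩, hmax⟩ :=
      BddAbove.exists_isGreatest_of_nonempty ⟨t, fun s hs => hs.1⟩ hZ
    refine ⟨u₀, hu₀, fun u hu s ⟨hs, hst⟩ => by_contra fun hsu => hs₀ ?_⟩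
    exact (hJ u₀).out hs (ht u₀ hu₀) ⟨hmax ⟨hst, u, hu, hsu⟩, hs₀t⟩
  · obtain ⟨u₀, hu₀⟩ := hP
    exact ⟨u₀, hu₀, fun u hu s ⟨_, hst⟩ => by_contra fun hsu => hZ ⟨s, hst, u, hu, hsu⟩⟩

theorem Set.OrdConnected.exists_inter_subset {α ι : Type*} [LinearOrder α] [SuccOrder α]
    [PredOrder α] [IsSuccArchimedean α] [IsPredArchimedean α] {P : Set ι} (hP : P.Nonempty)
    {J : ι → Set α} (hJ : ∀ u, (J u).OrdConnected) {t : α} (ht : ∀ u ∈ P, t ∈ J u) :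
    ∃ u₀ ∈ P, ∃ u₁ ∈ P, ∀ u ∈ P, J u₀ ∩ J u₁ ⊆ J u := by
  obtain ⟨u₀, hu₀, hlow⟩ := exists_inter_Iic_subset hP hJ ht
  obtain ⟨u₁, hu₁, hup⟩ := exists_inter_Iic_subset (α := αᵒᵈ)
    (J := fun u => OrderDual.ofDual ⁻¹' J u) hP (fun u => (hJ u).dual) (t := OrderDual.toDual t) ht
  refine ⟨u₀, hu₀, u₁, hu₁, fun u hu s ⟨hs₀, hs₁⟩ => ?_⟩
  rcases le_total s t with hst | hts
  · exact hlow u hu ⟨hs₀, hst⟩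
  · exact hup u hu (a := OrderDual.toDual s) ⟨hs₁, hts⟩

namespace IsWeakCell

open PresburgerDef PresburgerFun

variable {α : Type*} {C : Set ((α → ℤ) × ℤ)}

theorem presburgerDef (hC : IsWeakCell C) :
    PresburgerDef {v : α ⊕ Unit → ℤ | ((fun a => v (Sum.inl a)), v (Sum.inr ())) ∈ C} := by
  obtain ⟨S, k, N, hS, hC⟩ := hC
  have hS' := hS.relabel (Sum.inl (β := Unit))
  have ht := coord (Sum.inr () : α ⊕ Unit)
  have hmod := setOf_modEq ht k N
  have lower {f : (α → ℤ) → ℤ} (hf : PresburgerFun f) := setOf_le (hf.comp Sum.inl) ht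
  have upper {g : (α → ℤ) → ℤ} (hg : PresburgerFun g) := setOf_le ht (hg.comp Sum.inl)
  rcases hC with rfl | ⟨f, hf, rfl⟩ | ⟨g, hg, rfl⟩ | ⟨f, g, hf, hg, rfl⟩
  · exact hS'.inter_s16 hmod
  · exact hS'.inter_s16 ((lower hf).inter_s16 hmod)
  · exact hS'.inter_s16 ((upper hg).inter_s16 hmod)
  · exact hS'.inter_s16 ((lower hf).inter_s16 ((upper hg).inter_s16 hmod))

theorem exists_fiber_eq_inter (hC : IsWeakCell C) :
    ∃ (R : Set ℤ) (J : (α → ℤ) → Set ℤ), (∀ y, (J y).OrdConnected) ∧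
      ∀ y, Prod.mk y ⁻¹' C = R ∩ J y := by
  obtain ⟨S, k, N, -, hC⟩ := hC
  refine ⟨{t | t ≡ k [ZMOD N]}, ?_⟩
  rcases hC with rfl | ⟨f, -, rfl⟩ | ⟨g, -, rfl⟩ | ⟨f, g, -, -, rfl⟩
  · exact ⟨fun y => {_t | y ∈ S}, fun y => ⟨fun _ ha _ _ _ _ => ha⟩,
      fun y => by ext; simp [and_comm]⟩
  · exact ⟨fun y => {t | y ∈ S ∧ f y ≤ t}, fun y => ⟨fun _ ha _ _ _ hc => ⟨ha.1, ha.2.trans hc.1⟩⟩,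
      fun y => by ext; simp; tauto⟩
  · exact ⟨fun y => {t | y ∈ S ∧ t ≤ g y}, fun y => ⟨fun _ _ _ hb _ hc => ⟨hb.1, hc.2.trans hb.2⟩⟩,
      fun y => by ext; simp; tauto⟩
  · exact ⟨fun y => {t | y ∈ S ∧ f y ≤ t ∧ t ≤ g y},
      fun y => ⟨fun _ ha _ hb _ hc => ⟨ha.1, ha.2.1.trans hc.1, hc.2.trans hb.2.2⟩⟩,
      fun y => by ext; simp; tauto⟩

end IsWeakCell

section PairWitness

variable {μ ν : Type*}

def sliceParams (j : Fin 3) (v : (Fin 3 × μ) ⊕ ν → ℤ) : μ ⊕ ν → ℤ :=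
  fun a => v (Sum.map (Prod.mk j) id a)

@[simp]
theorem sliceParams_elim_uncurry (j : Fin 3) (w : Fin 3 → μ → ℤ) (x : ν → ℤ) :
    sliceParams j (Sum.elim (Function.uncurry w) x) = Sum.elim (w j) x := by
  ext (a | a) <;> rfl

/-- A point `v` encodes `(u₀, u₁, u, x)`; it lies in `pairWitness C` iff the fibre
`C_{u₀,x} ∩ C_{u₁,x}` is nonempty and contained in `C_{u,x}`. -/
def pairWitness (C : Set ((μ ⊕ ν → ℤ) × ℤ)) : Set ((Fin 3 × μ) ⊕ ν → ℤ) :=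
  {v | (∃ t, (sliceParams 0 v, t) ∈ C ∧ (sliceParams 1 v, t) ∈ C) ∧
    ∀ t, (sliceParams 0 v, t) ∈ C → (sliceParams 1 v, t) ∈ C → (sliceParams 2 v, t) ∈ C}

theorem presburgerDef_pairWitness {C : Set ((μ ⊕ ν → ℤ) × ℤ)}
    (hC : PresburgerDef
      {v : (μ ⊕ ν) ⊕ Unit → ℤ | ((fun a => v (Sum.inl a)), v (Sum.inr ())) ∈ C}) :
    PresburgerDef (pairWitness C) := by
  have hCj (j : Fin 3) := hC.relabel (Sum.map (Sum.map (Prod.mk j) id) id)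
  convert ((hCj 0).inter_s16 (hCj 1)).exists_int.inter_s16
    (((hCj 0).inter_s16 (hCj 1)).compl.union_s16 (hCj 2)).forall_int using 1
  ext v
  simp only [pairWitness, Set.mem_ofPred_eq, Set.mem_inter_iff, Set.mem_union,
    Set.mem_compl_iff, Sum.map_inl, Sum.map_inr, Sum.elim_inl, Sum.elim_inr]
  exact and_congr Iff.rfl (forall_congr' fun _ => by tauto)

end PairWitness

theorem IsWeakCell.exists_forall_mem_iff {μ ν : Type*} {C : Set ((μ ⊕ ν → ℤ) × ℤ)}
    (hC : IsWeakCell C) (P : Set (μ → ℤ)) (x : ν → ℤ) :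
    (∃ t, ∀ u ∈ P, (Sum.elim u x, t) ∈ C) ↔
      ∃ u₀ u₁, (∀ u ∈ P, u₀ ∈ P ∧ u₁ ∈ P) ∧
        ∀ u ∈ P, Sum.elim (Function.uncurry ![u₀, u₁, u]) x ∈ pairWitness C := by
  rcases P.eq_empty_or_nonempty with rfl | hP
  · simp
  obtain ⟨R, J, hJ, hfiber⟩ := hC.exists_fiber_eq_inter
  have mem_iff (y : μ ⊕ ν → ℤ) (t : ℤ) : (y, t) ∈ C ↔ t ∈ R ∧ t ∈ J y := by
    rw [← Set.mem_inter_iff, ← hfiber]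
    rfl
  simp only [pairWitness, Set.mem_ofPred_eq, sliceParams_elim_uncurry, Matrix.cons_val_zero,
    Matrix.cons_val_one, Matrix.cons_val_two, Matrix.head_cons, Matrix.tail_cons]
  constructor
  · rintro ⟨t, ht⟩
    obtain ⟨u₀, hu₀, u₁, hu₁, hsub⟩ := Set.OrdConnected.exists_inter_subset hP
      (J := fun u => J (Sum.elim u x)) (fun _ => hJ _) (t := t)
      (fun u hu => ((mem_iff _ _).1 (ht u hu)).2)
    refine ⟨u₀, u₁, fun _ _ => ⟨hu₀, hu₁⟩,
      fun u hu => ⟨⟨t, ht u₀ hu₀, ht u₁ hu₁⟩, fun s hs₀ hs₁ => ?_⟩⟩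
    rw [mem_iff] at hs₀ hs₁ ⊢
    exact ⟨hs₀.1, hsub u hu ⟨hs₀.2, hs₁.2⟩⟩
  · rintro ⟨u₀, u₁, -, hw⟩
    obtain ⟨u, hu⟩ := hP
    obtain ⟨t, ht₀, ht₁⟩ := (hw u hu).1
    exact ⟨t, fun u' hu' => (hw u' hu').2 t ht₀ ht₁⟩

theorem InT.of_finite_params {E : Set ℤ} {n : ℕ} {κ : Type} [Finite κ]
    {X : Set (κ ⊕ Fin n → ℤ)} (hX : PresburgerDef X) {I : Type} (P : I → Set (κ → ℤ))
    (hPE : ∀ α, ∀ u ∈ P α, ∀ i, u i ∈ E) {A : Set (Fin n → ℤ)}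
    (hA : A = ⋃ α, ⋂ u ∈ P α, {x | Sum.elim u x ∈ X}) : InT E n A := by
  obtain ⟨m, ⟨e⟩⟩ := Finite.exists_equiv_fin κ
  refine ⟨m, {v | (fun a => v (Sum.map e id a)) ∈ X}, I, fun α => (· ∘ e.symm) '' P α,
    hX.relabel _, ?_, ?_⟩
  · rintro α _ ⟨u, hu, rfl⟩ i
    exact hPE α u hu _
  · have reindex (u : κ → ℤ) (x : Fin n → ℤ) :
        (fun a => Sum.elim (u ∘ e.symm) x (Sum.map e id a)) = Sum.elim u x := by
      ext (a | a) <;> simp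
    simp [hA, reindex]

/-- The projection of a set in `𝒮_{n+1}` onto its first `n` coordinates is a
set in `𝒯_n`. -/
theorem proj_InS_mem_InT (E : Set ℤ) (n : ℕ)
    (A : Set (Fin (n + 1) → ℤ)) (hA : InS E (n + 1) A) :
    InT E n {x : Fin n → ℤ | ∃ t : ℤ, Fin.snoc x t ∈ A} := by
  obtain ⟨m, C, I, P, hC, hPE, rfl⟩ := hA
  refine InT.of_finite_params (presburgerDef_pairWitness hC.presburgerDef)
    -- phrased so that an empty `P α` still yields an index, with an empty family
    (I := {q : I × (Fin m → ℤ) × (Fin m → ℤ) // ∀ u ∈ P q.1, q.2.1 ∈ P q.1 ∧ q.2.2 ∈ P q.1})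
    (fun q => (fun u => Function.uncurry ![q.1.2.1, q.1.2.2, u]) '' P q.1.1) ?_ ?_
  · rintro ⟨⟨α, u₀, u₁⟩, hq⟩ _ ⟨u, hu, rfl⟩ ⟨j, i⟩
    obtain ⟨hu₀, hu₁⟩ := hq u hu
    fin_cases j
    exacts [hPE α _ hu₀ i, hPE α _ hu₁ i, hPE α _ hu i]
  · ext x
    simp only [Set.mem_ofPred_eq, Set.mem_iUnion, Set.mem_iInter, Fin.snoc_castSucc,
      Fin.snoc_last, Set.forall_mem_image, Subtype.exists, Prod.exists]
    rw [exists_comm]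
    refine exists_congr fun α => (hC.exists_forall_mem_iff (P α) x).trans ?_
    simp only [exists_prop]
end
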